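/- Kučera's tail theorem: For every Π⁰₁ class P ⊆ 2^ω with μ(P) > 0 and every Martin-Löf random A ∈ 2^ω, there exist a string σ ∈ 2^{<ω} and B ∈ P such that A = σ⌢B (i.e. some tail of A belongs to P). -/

import Mathlib

open scoped ENNReal NNReal Classical

namespace AR

/-- Elements of Cantor space `2^ω`: infinite binary sequences. -/
abbrev Seq := ℕ → Bool

/-- Finite binary strings `2^{<ω}`. -/
abbrev Str := List Bool

/-- The first `n` bits of a sequence `A`, as a finite string (`A↾n`). -/
def pre (A : Seq) (n : ℕ) : Str := List.ofFn fun i : Fin n => A i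

/-- The basic clopen cylinder `[σ]` of all sequences extending `σ`. -/
def cyl (σ : Str) : Set Seq := {A | pre A σ.length = σ}

/-- A measure on Cantor space is *fair-coin* if every cylinder `[σ]` has measure
`2^{-|σ|}`; this uniquely characterizes the usual product measure `μ` on `2^ω`. -/
def FairCoin (μ : MeasureTheory.Measure Seq) : Prop :=
  ∀ σ : Str, μ (cyl σ) = (2 : ℝ≥0∞)⁻¹ ^ σ.length

/-- A machine is a partial computable function `2^{<ω} ⇀ 2^{<ω}`. -/
def IsMachine (M : Str →. Str) : Prop := Partrec M

/-- Kolmogorov complexity of `τ` relative to the machine `M`: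
`C_M(τ) = min{|σ| : M(σ)↓ = τ}`, with value `∞` if no such `σ` exists. -/
noncomputable def Cplx (M : Str →. Str) (τ : Str) : ℕ∞ :=
  sInf ((fun σ : Str => (σ.length : ℕ∞)) '' {σ | τ ∈ M σ})

/-- A universal machine: a machine simulating every machine up to an additive
constant.  `Cplx U` for universal `U` is plain Kolmogorov complexity `C`. -/
def UniversalMachine (U : Str →. Str) : Prop :=
  IsMachine U ∧ ∀ M : Str →. Str, IsMachine M → ∃ c : ℕ, ∀ τ, Cplx U τ ≤ Cplx M τ + c

/-- A set of strings is prefix-free if none of its elements is a proper initial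
segment of another. -/
def PrefixFree (S : Set Str) : Prop :=
  ∀ σ ∈ S, ∀ τ ∈ S, σ <+: τ → σ = τ

/-- A prefix-free machine: a machine whose domain is prefix-free. -/
def PrefixFreeMachine (M : Str →. Str) : Prop :=
  IsMachine M ∧ PrefixFree {σ | (M σ).Dom}

/-- A universal prefix-free machine.  `Cplx U` for such `U` is prefix-free
Kolmogorov complexity `K`. -/
def UniversalPFMachine (U : Str →. Str) : Prop :=
  PrefixFreeMachine U ∧
    ∀ M : Str →. Str, PrefixFreeMachine M → ∃ c : ℕ, ∀ τ, Cplx U τ ≤ Cplx M τ + c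

/-- A c.e. (recursively enumerable) predicate. -/
def CEPred {α} [Primcodable α] (p : α → Prop) : Prop :=
  Partrec fun a => Part.assert (p a) fun _ => Part.some ()

/-- A Martin-Löf test: a sequence of uniformly Σ⁰₁ classes `U i`, given by a single
c.e. set `W` of pairs, with `μ (U i) ≤ 2^{-i}`. -/
def MLTest (μ : MeasureTheory.Measure Seq) (U : ℕ → Set Seq) : Prop :=
  ∃ W : Set (ℕ × Str), CEPred (· ∈ W) ∧
    (∀ i, U i = ⋃ σ ∈ {σ : Str | (i, σ) ∈ W}, cyl σ) ∧
    ∀ i, μ (U i) ≤ (2 : ℝ≥0∞)⁻¹ ^ i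

/-- `A` is Martin-Löf random if it passes every Martin-Löf test. -/
def MLRandom (μ : MeasureTheory.Measure Seq) (A : Seq) : Prop :=
  ∀ U : ℕ → Set Seq, MLTest μ U → A ∉ ⋂ i, U i

/-- The concatenation `σ⌢B` of a finite string and an infinite sequence. -/
def catSeq (σ : Str) (B : Seq) : Seq := fun n => σ.getD n (B (n - σ.length))

/-!
Write `P = [W]ᶜ` with `W` c.e., so `μ[W] < 1`. The minimal strings having a prefix enumerated
into `W` within as many steps as their length form a decidable prefix-free set `G` with
`[G] = [W]`, hence `∑_{σ ∈ G} 2^{-|σ|} = μ[W] < 1`. If no tail of `A` were in `P`, every tail of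
`A` would lie in `[G]`, and peeling off `G`-blocks one at a time puts `A` in `[Gⁿ]` for every `n`.
As `μ[Gⁿ] ≤ μ[W]ⁿ`, the classes `[G^(i N)]` with `μ[W]^N ≤ 1/2` form a Martin-Löf test that `A`
fails.
-/

open MeasureTheory

def tail (A : Seq) (n : ℕ) : Seq := fun i => A (n + i)

def cylUnion (L : Set Str) : Set Seq := ⋃ σ ∈ L, cyl σ

@[simp] lemma length_pre (A : Seq) (n : ℕ) : (pre A n).length = n := by simp [pre]

lemma take_pre (A : Seq) {m n : ℕ} (h : m ≤ n) : (pre A n).take m = pre A m := by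
  apply List.ext_getElem <;> simp [pre, h]

lemma pre_add (A : Seq) (m n : ℕ) : pre A (m + n) = pre A m ++ pre (tail A m) n := by
  apply List.ext_getElem (by simp)
  intro i _ _
  rcases lt_or_ge i m with h | h
  · simp [pre, List.getElem_append_left, h]
  · simp [pre, List.getElem_append_right, h, tail]

lemma catSeq_pre_tail (A : Seq) (n : ℕ) : catSeq (pre A n) (tail A n) = A := by
  funext i
  rcases lt_or_ge i n with h | h
  · simp [catSeq, pre, h]
  · simp [catSeq, tail, h]

lemma tail_zero (A : Seq) : tail A 0 = A := by
  funext i; simp [tail]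

lemma tail_tail (A : Seq) (m n : ℕ) : tail (tail A m) n = tail A (m + n) := by
  funext i; simp [tail, Nat.add_assoc]

lemma mem_cyl_iff {A : Seq} {σ : Str} : A ∈ cyl σ ↔ pre A σ.length = σ := Iff.rfl

lemma mem_cyl_pre (A : Seq) (n : ℕ) : A ∈ cyl (pre A n) := by
  simp [mem_cyl_iff]

lemma mem_cyl_iff_forall {A : Seq} {σ : Str} : A ∈ cyl σ ↔ ∀ i : Fin σ.length, A i = σ[i] := by
  rw [mem_cyl_iff, List.ext_get_iff]
  simp [pre, Fin.forall_iff]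

@[simp] lemma cyl_nil : cyl [] = Set.univ := by
  ext A; simp [mem_cyl_iff, pre]

lemma mem_cyl_append {A : Seq} {σ : Str} (hσ : A ∈ cyl σ) {τ : Str}
    (hτ : tail A σ.length ∈ cyl τ) : A ∈ cyl (σ ++ τ) := by
  rw [mem_cyl_iff] at *
  rw [List.length_append, pre_add, hσ, hτ]

lemma prefix_or_prefix_of_mem_cyl {A : Seq} {σ τ : Str} (hσ : A ∈ cyl σ) (hτ : A ∈ cyl τ) :
    σ <+: τ ∨ τ <+: σ := by
  rw [mem_cyl_iff] at hσ hτ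
  rw [← hσ, ← hτ]
  rcases le_total σ.length τ.length with h | h
  · exact .inl (take_pre A h ▸ List.take_prefix _ _)
  · exact .inr (take_pre A h ▸ List.take_prefix _ _)

lemma mem_cylUnion_iff {A : Seq} {L : Set Str} : A ∈ cylUnion L ↔ ∃ n, pre A n ∈ L := by
  simp only [cylUnion, Set.mem_iUnion, exists_prop]
  constructor
  · rintro ⟨σ, hσ, hA⟩
    exact ⟨σ.length, (mem_cyl_iff.mp hA).symm ▸ hσ⟩
  · rintro ⟨n, hn⟩
    exact ⟨_, hn, mem_cyl_pre A n⟩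

lemma measurableSet_cyl (σ : Str) : MeasurableSet (cyl σ) := by
  have : cyl σ = ⋂ i : Fin σ.length, (fun A : Seq => A i) ⁻¹' {σ[i]} := by
    ext A; simp [mem_cyl_iff_forall]
  rw [this]
  exact .iInter fun i => measurable_pi_apply _ (measurableSet_singleton _)

lemma measurableSet_cylUnion (L : Set Str) : MeasurableSet (cylUnion L) :=
  .biUnion (Set.to_countable L) fun σ _ => measurableSet_cyl σ

noncomputable def weight (L : Set Str) : ℝ≥0∞ := ∑' σ : L, 2⁻¹ ^ (σ : Str).length

lemma weight_mul_le (L M : Language Bool) : weight (L * M) ≤ weight L * weight M := by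
  let concat : Set.Elem L × Set.Elem M → Set.Elem (L * M) := fun p =>
    ⟨p.1 ++ p.2, Language.mem_mul.mpr ⟨_, p.1.2, _, p.2.2, rfl⟩⟩
  have hconcat : Function.Surjective concat := by
    rintro ⟨σ, hσ⟩
    obtain ⟨a, ha, b, hb, rfl⟩ := Language.mem_mul.mp hσ
    exact ⟨(⟨a, ha⟩, ⟨b, hb⟩), rfl⟩
  let w : Str → ℝ≥0∞ := fun σ => 2⁻¹ ^ σ.length
  calc weight (L * M) ≤ ∑' p : Set.Elem L × Set.Elem M, w (p.1 ++ p.2) :=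
        ENNReal.tsum_le_tsum_comp_of_surjective hconcat _
    _ = ∑' (a : Set.Elem L) (b : Set.Elem M), w a * w b := by
        simp only [w, List.length_append, pow_add]
        exact ENNReal.tsum_prod (f := fun (a : Set.Elem L) (b : Set.Elem M) => w a * w b)
    _ = weight L * weight M := by
        simp only [ENNReal.tsum_mul_left, ENNReal.tsum_mul_right, weight, w]

lemma weight_one : weight (1 : Language Bool) = 1 := by
  simp [weight, Language.one_def]

lemma weight_pow_le (L : Language Bool) (n : ℕ) : weight (L ^ n) ≤ weight L ^ n := by
  induction n with
  | zero => simp [weight_one]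
  | succ n ih =>
    calc weight (L ^ (n + 1)) ≤ weight L * weight (L ^ n) := by
          rw [pow_succ']; exact weight_mul_le _ _
      _ ≤ weight L * weight L ^ n := by gcongr
      _ = weight L ^ (n + 1) := (pow_succ' _ _).symm

lemma FairCoin.measure_univ {μ : Measure Seq} (hμ : FairCoin μ) : μ Set.univ = 1 := by
  simpa using hμ []

lemma FairCoin.measure_cylUnion_le {μ : Measure Seq} (hμ : FairCoin μ) (L : Set Str) :
    μ (cylUnion L) ≤ weight L :=
  (measure_biUnion_le μ L.to_countable _).trans_eq (tsum_congr fun σ => hμ σ)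

lemma PrefixFree.pairwiseDisjoint_cyl {L : Set Str} (hL : PrefixFree L) :
    L.PairwiseDisjoint cyl := by
  intro σ hσ τ hτ hne
  refine Set.disjoint_left.mpr fun A hAσ hAτ => hne ?_
  rcases prefix_or_prefix_of_mem_cyl hAσ hAτ with h | h
  · exact hL σ hσ τ hτ h
  · exact (hL τ hτ σ hσ h).symm

lemma FairCoin.measure_cylUnion_eq {μ : Measure Seq} (hμ : FairCoin μ) {L : Set Str}
    (hL : PrefixFree L) :
    μ (cylUnion L) = weight L := by
  rw [cylUnion, measure_biUnion L.to_countable hL.pairwiseDisjoint_cyl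
    fun σ _ => measurableSet_cyl σ]
  exact tsum_congr fun σ => hμ σ

lemma mem_cylUnion_pow_of_forall_tail {L : Language Bool} {A : Seq}
    (h : ∀ n, tail A n ∈ cylUnion L) (k : ℕ) : A ∈ cylUnion (L ^ k) := by
  induction k generalizing A with
  | zero => simp [cylUnion, Language.one_def]
  | succ k ih =>
    obtain ⟨σ, hσL, hAσ⟩ := Set.mem_iUnion₂.mp (tail_zero A ▸ h 0)
    obtain ⟨τ, hτL, hAτ⟩ := Set.mem_iUnion₂.mp (ih fun n => tail_tail A σ.length n ▸ h _)
    rw [pow_succ']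
    exact Set.mem_biUnion (Language.mem_mul.mpr ⟨σ, hσL, τ, hτL, rfl⟩) (mem_cyl_append hAσ hAτ)

def minimalStrings (H : Set Str) : Set Str := {σ | σ ∈ H ∧ ∀ m < σ.length, σ.take m ∉ H}

lemma prefixFree_minimalStrings (H : Set Str) : PrefixFree (minimalStrings H) := by
  intro σ hσ τ hτ hστ
  by_contra hne
  have hlt : σ.length < τ.length :=
    lt_of_le_of_ne hστ.length_le fun h => hne (hστ.eq_of_length h)
  exact hτ.2 σ.length hlt ((List.prefix_iff_eq_take.mp hστ) ▸ hσ.1)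

lemma cylUnion_minimalStrings (H : Set Str) : cylUnion (minimalStrings H) = cylUnion H := by
  ext A
  simp only [mem_cylUnion_iff]
  refine ⟨fun ⟨n, hn⟩ => ⟨n, hn.1⟩, fun hA => ?_⟩
  classical
  refine ⟨Nat.find hA, Nat.find_spec hA, fun m hm => ?_⟩
  rw [length_pre] at hm
  rw [take_pre A hm.le]
  exact Nat.find_min hA hm

lemma primrecPred_minimalStrings {H : Set Str} (hH : PrimrecPred (· ∈ H)) :
    PrimrecPred (· ∈ minimalStrings H) := by
  have htake : PrimrecRel fun (m : ℕ) (σ : Str) => σ.take m ∉ H :=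
    (hH.comp (Primrec.list_take.comp Primrec.fst Primrec.snd)).not
  refine .of_eq (hH.and ((htake.forall_mem_list).comp
    (Primrec.list_range.comp Primrec.list_length) .id)) fun σ => ?_
  simp [minimalStrings]

open Nat.Partrec (Code)
open Nat.Partrec.Code Encodable

lemma CEPred.exists_code {α : Type*} [Primcodable α] {p : α → Prop} (hp : CEPred p) :
    ∃ c : Code, ∀ a, p a ↔ (eval c (encode a)).Dom := by
  obtain ⟨c, hc⟩ := Nat.Partrec.Code.exists_code.mp hp
  exact ⟨c, fun a => by simp [hc, encodek, Part.assert]⟩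

lemma dom_eval_iff_exists_isSome_evaln (c : Code) (n : ℕ) :
    (eval c n).Dom ↔ ∃ s, (evaln s c n).isSome := by
  simp only [Part.dom_iff_mem, evaln_complete, Option.isSome_iff_exists]
  exact ⟨fun ⟨x, s, hx⟩ => ⟨s, x, hx⟩, fun ⟨s, x, hx⟩ => ⟨x, s, hx⟩⟩

-- Bounding the stage by the length of the string makes this set decidable without changing
-- the open set it generates.
def hitBy (c : Code) : Set Str :=
  {σ | ∃ j ≤ σ.length, (evaln σ.length c (encode (σ.take j))).isSome}

lemma cylUnion_hitBy {c : Code} {W : Set Str} (hc : ∀ τ, τ ∈ W ↔ (eval c (encode τ)).Dom) :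
    cylUnion (hitBy c) = cylUnion W := by
  ext A
  simp only [mem_cylUnion_iff, hc, dom_eval_iff_exists_isSome_evaln]
  constructor
  · rintro ⟨n, j, hj, hs⟩
    simp only [length_pre] at hj hs
    exact ⟨j, n, take_pre A hj ▸ hs⟩
  · rintro ⟨n, s, hs⟩
    obtain ⟨x, hx⟩ := Option.isSome_iff_exists.mp hs
    refine ⟨max s n, n, by simp, ?_⟩
    rw [length_pre, take_pre A (le_max_right s n)]
    exact Option.isSome_iff_exists.mpr ⟨x, evaln_mono (le_max_left s n) hx⟩

lemma primrecPred_hitBy (c : Code) : PrimrecPred (· ∈ hitBy c) := by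
  have henum : PrimrecRel fun (j : ℕ) (σ : Str) =>
      (evaln σ.length c (encode (σ.take j))).isSome := by
    refine Primrec.eq.comp (Primrec.option_isSome.comp (primrec_evaln.comp
      (g := fun q : ℕ × Str => ((q.2.length, c), encode (q.2.take q.1))) ?_)) (.const true)
    exact .pair (.pair (Primrec.list_length.comp .snd) (.const c))
      (Primrec.encode.comp (Primrec.list_take.comp .fst .snd))
  refine .of_eq ((henum.exists_mem_list).comp
    (Primrec.list_range.comp (Primrec.succ.comp Primrec.list_length)) .id) fun σ => ?_
  simp [hitBy]

lemma CEPred.exists_primrecPred_prefixFree {W : Set Str} (hW : CEPred (· ∈ W)) :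
    ∃ G : Set Str, PrimrecPred (· ∈ G) ∧ PrefixFree G ∧ cylUnion G = cylUnion W := by
  obtain ⟨c, hc⟩ := hW.exists_code
  exact ⟨minimalStrings (hitBy c), primrecPred_minimalStrings (primrecPred_hitBy c),
    prefixFree_minimalStrings _, (cylUnion_minimalStrings _).trans (cylUnion_hitBy hc)⟩

lemma rePred_exists_of_primrecRel {α β : Type*} [Primcodable α] [Primcodable β]
    {R : α → β → Prop} (hR : PrimrecRel R) : REPred fun a => ∃ b, R a b := by
  classical
  let test : α → ℕ → Bool := fun a n =>
    ((decode (α := β) n).map fun b => decide (R a b)).getD false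
  have htest : Primrec₂ test :=
    Primrec.option_getD.comp (Primrec.option_map (Primrec.decode.comp .snd)
      (hR.decide.comp (Primrec.fst.comp .fst) .snd).to₂) (.const false)
  have htest_iff : ∀ a n, test a n = true ↔ ∃ b, decode n = some b ∧ R a b := by
    intro a n
    rcases hd : decode (α := β) n with _ | b <;> simp [test, hd]
  refine (Partrec.rfind htest.to_comp.partrec₂).dom_re.of_eq fun a => ?_
  simp only [Nat.rfind_dom, PFun.coe_val, Part.mem_some_iff, Part.some_dom, implies_true,
    and_true]
  constructor
  · rintro ⟨n, hn⟩
    obtain ⟨b, -, hb⟩ := (htest_iff a n).mp hn.symm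
    exact ⟨b, hb⟩
  · rintro ⟨b, hb⟩
    exact ⟨encode b, ((htest_iff a _).mpr ⟨b, encodek b, hb⟩).symm⟩

lemma rePred_mem_pow {G : Language Bool} (hG : PrimrecPred (· ∈ G)) :
    REPred fun p : ℕ × Str => p.2 ∈ G ^ p.1 := by
  have hR : PrimrecRel fun (p : ℕ × Str) (S : List Str) =>
      p.2 = S.flatten ∧ S.length = p.1 ∧ ∀ y ∈ S, y ∈ G :=
    (Primrec.eq.comp (Primrec.snd.comp .fst) (Primrec.list_flatten.comp .snd)).and
      ((Primrec.eq.comp (Primrec.list_length.comp .snd) (Primrec.fst.comp .fst)).and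
        ((hG.forall_mem_list).comp .snd))
  exact (rePred_exists_of_primrecRel hR).of_eq fun p => Language.mem_pow.symm

lemma FairCoin.mlTest_cylUnion_pow {μ : Measure Seq} (hμ : FairCoin μ) {G : Language Bool}
    (hG : PrimrecPred (· ∈ G)) {N : ℕ} (hN : weight G ^ N ≤ 2⁻¹) :
    MLTest μ fun i => cylUnion (G ^ (i * N)) := by
  refine ⟨{p | p.2 ∈ G ^ (p.1 * N)}, ?_, fun i => rfl, fun i => ?_⟩
  · exact (rePred_mem_pow hG).comp
      (Primrec.pair (Primrec.nat_mul.comp .fst (.const N)) .snd).to_comp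
  · calc μ (cylUnion (G ^ (i * N))) ≤ weight (G ^ (i * N)) := hμ.measure_cylUnion_le _
      _ ≤ weight G ^ (i * N) := weight_pow_le G _
      _ = (weight G ^ N) ^ i := by rw [← pow_mul, mul_comm]
      _ ≤ 2⁻¹ ^ i := by gcongr

lemma MLRandom.exists_tail_not_mem_cylUnion {μ : Measure Seq} (hμ : FairCoin μ) {A : Seq}
    (hA : MLRandom μ A) {G : Language Bool} (hG : PrimrecPred (· ∈ G)) (hw : weight G < 1) :
    ∃ n, tail A n ∉ cylUnion G := by
  by_contra! htails
  obtain ⟨N, hN⟩ : ∃ N, weight G ^ N ≤ 2⁻¹ :=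
    ((ENNReal.tendsto_pow_atTop_nhds_zero_of_lt_one hw).eventually
      (ge_mem_nhds (by norm_num))).exists
  exact hA _ (hμ.mlTest_cylUnion_pow hG hN)
    (Set.mem_iInter.mpr fun i => mem_cylUnion_pow_of_forall_tail htails _)

/-- **Kučera's tail theorem**: for every Π⁰₁ class `P` of positive measure and every
Martin-Löf random `A`, some tail of `A` belongs to `P`: there are `σ` and `B ∈ P`
with `A = σ⌢B`. -/
theorem kucera_tails (μ : MeasureTheory.Measure Seq) (hμ : FairCoin μ)
    (P : Set Seq) (hP : ∃ W : Set Str, CEPred (· ∈ W) ∧ P = (⋃ σ ∈ W, cyl σ)ᶜ)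
    (hpos : 0 < μ P) (A : Seq) (hA : MLRandom μ A) :
    ∃ (σ : Str) (B : Seq), B ∈ P ∧ A = catSeq σ B := by
  obtain ⟨W, hW, rfl⟩ := hP
  obtain ⟨G, hG, hGfree, hGW⟩ := hW.exists_primrecPred_prefixFree
  have hw : weight G < 1 := by
    have : IsProbabilityMeasure μ := ⟨hμ.measure_univ⟩
    rw [← hμ.measure_cylUnion_eq hGfree, hGW, ← tsub_pos_iff_lt,
      ← prob_compl_eq_one_sub (measurableSet_cylUnion W)]
    exact hpos
  obtain ⟨n, hn⟩ := hA.exists_tail_not_mem_cylUnion hμ hG hw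
  rw [hGW] at hn
  exact ⟨pre A n, tail A n, hn, (catSeq_pre_tail A n).symm⟩

end AR
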